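/- Let T be a tree and P_T its lattice of subtrees. For every element p ∈ P_T, the set of atoms below p spans the subtree corresponding to p, which is acyclic; consequently, for any coordinatization of P_T, the lcm lattice of the resulting monomial ideal is P_T and its minimal free resolution is supported on the simplicial complex T (i.e., T_{≤p} is acyclic for all p ∈ P_T). -/

import Mathlib

/-!
Fix a variable `x`. By (C2) the labels involving `x` sit on a chain, and the `x`-exponent of
`x(a) = ∏_{p ≱ a} m_p` is the weight of the down-set `{p ≱ a}` of that chain. Down-sets of a
chain are nested, so these weights are compared by inclusion and the weight of a union of
down-sets is the largest of them. Hence `x(·)` sends least upper bounds to lcms, and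
`x(q) ∣ x(q')` forces `q ≤ q'`: otherwise a subtree maximal among those containing `q'` and
avoiding some vertex of `q` is meet-irreducible (subtrees of a tree are closed under
intersection), so it carries a nonzero label. In a tree every finite family of subtrees has a
least upper bound, the intersection of all subtrees containing it, so `x(·)` is an order
isomorphism of `P_T` onto the lcm lattice of the atom monomials.
-/

open scoped Classical

/-- Monomials in variables `V`, represented by exponent vectors.
Multiplication is `+`, divisibility is `≤`, gcd is `⊓`, lcm is `⊔`, and the
trivial monomial `1` is `0`. -/
abbrev Monomial (V : Type*) := V →₀ ℕ

/-- An element `x` is meet-irreducible if `x ≠ ⊤` and `x ≠ a ⊓ b` for all `a, b > x`. -/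
def MeetIrred {P : Type*} [Lattice P] [OrderTop P] (x : P) : Prop :=
  x ≠ ⊤ ∧ ∀ a b : P, x < a → x < b → x ≠ a ⊓ b

/-- A finite lattice is atomic if every element other than `⊥` is the join of
the atoms below it. -/
def IsFinAtomic (P : Type*) [Lattice P] [BoundedOrder P] : Prop :=
  ∀ p : P, p ≠ ⊥ → IsLUB {a : P | IsAtom a ∧ a ≤ p} p

/-- The monomial `x(a) = ∏_{p ∈ (⌈a⌉)ᶜ} m_p` attached to `a` by a labeling `m`. -/
noncomputable def coordGen {P V : Type*} [PartialOrder P] [Fintype P]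
    (m : P → Monomial V) (a : P) : Monomial V :=
  ∑ p ∈ Finset.univ.filter (fun p : P => ¬ a ≤ p), m p

/-- The lcm lattice of a finite family of monomials: all least common multiples
of subsets of the family (the empty lcm being `1`), ordered by divisibility. -/
abbrev LcmLat {ι V : Type*} [Fintype ι] (g : ι → Monomial V) : Type _ :=
  {l : Monomial V // ∃ s : Finset ι, l = s.sup g}

/-- Condition (C1): every meet-irreducible element has a nontrivial label. -/
def CondC1 {P V : Type*} [Lattice P] [BoundedOrder P] (m : P → Monomial V) : Prop :=
  ∀ p : P, MeetIrred p → m p ≠ 0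

/-- Condition (C2): labels with a common variable sit on comparable elements. -/
def CondC2 {P V : Type*} [PartialOrder P] (m : P → Monomial V) : Prop :=
  ∀ p q : P, m p ⊓ m q ≠ 0 → p ≤ q ∨ q ≤ p

/-- A labeling is a coordinatization if the lcm lattice of the ideal generated
by the monomials `x(a)`, for `a` ranging over the atoms, is isomorphic to `P`. -/
def IsCoordinatization {P V : Type*} [PartialOrder P] [OrderBot P] [Fintype P]
    (m : P → Monomial V) : Prop :=
  Nonempty (P ≃o LcmLat (fun a : {a : P // IsAtom a} => coordGen m a.val))

section Trees

variable {V : Type*} [Fintype V] (G : SimpleGraph V)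

/-- The poset `P_T` of subtrees of `T`: finite sets of vertices whose induced
subgraph is (pre)connected, ordered by inclusion.  This includes the empty set
and all single vertices. -/
abbrev SubtreePoset (G : SimpleGraph V) : Type _ :=
  {s : Finset V // (G.induce (↑s : Set V)).Preconnected}

noncomputable instance : Fintype (SubtreePoset G) := Fintype.ofFinite _

/-- The single-vertex subtree `{v}`, an atom of `P_T`. -/
def vertexSubtree (v : V) : SubtreePoset G :=
  ⟨{v}, by
    rintro ⟨a, ha⟩ ⟨b, hb⟩
    simp only [Finset.coe_singleton, Set.mem_singleton_iff] at ha hb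
    subst ha; subst hb
    exact SimpleGraph.Reachable.refl _⟩

/-- The empty subtree, the minimum of `P_T`. -/
def emptySubtree : SubtreePoset G :=
  ⟨∅, by rintro ⟨a, ha⟩; simp at ha⟩

end Trees

open Finset

section ChainSupport

variable {P : Type*} [PartialOrder P] {f : P → ℕ}

lemma mem_of_sum_le_sum_of_isChain (hf : IsChain (· ≤ ·) {p | f p ≠ 0}) {D D' : Finset P}
    (hD : IsLowerSet (D : Set P)) (hD' : IsLowerSet (D' : Set P))
    (hle : ∑ p ∈ D, f p ≤ ∑ p ∈ D', f p) {p : P} (hp : f p ≠ 0) (hpD : p ∈ D) :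
    p ∈ D' := by
  by_contra hpD'
  have hsub : D'.filter (f · ≠ 0) ⊆ D.filter (f · ≠ 0) := by
    intro r hr
    rw [mem_filter] at hr ⊢
    refine ⟨?_, hr.2⟩
    rcases hf.total hr.2 hp with hrp | hpr
    · exact hD hrp hpD
    · exact absurd (hD' hpr hr.1) hpD'
  have hlt := sum_lt_sum_of_subset hsub (mem_filter.2 ⟨hpD, hp⟩)
    (fun h => hpD' (mem_filter.1 h).1) (Nat.pos_of_ne_zero hp) (fun _ _ _ => Nat.zero_le _)
  rw [sum_filter_ne_zero, sum_filter_ne_zero] at hlt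
  exact hlt.not_ge hle

lemma sum_biUnion_eq_sup_of_isChain [DecidableEq P] {ι : Type*}
    (hf : IsChain (· ≤ ·) {p | f p ≠ 0}) (s : Finset ι) (D : ι → Finset P)
    (hD : ∀ i ∈ s, IsLowerSet (D i : Set P)) :
    ∑ p ∈ s.biUnion D, f p = s.sup fun i => ∑ p ∈ D i, f p := by
  refine le_antisymm ?_
    (Finset.sup_le fun i hi => sum_le_sum_of_subset (subset_biUnion_of_mem D hi))
  rcases s.eq_empty_or_nonempty with rfl | hs
  · simp
  obtain ⟨i, hi, hmax⟩ := exists_max_image s (fun i => ∑ p ∈ D i, f p) hs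
  have hsub : (s.biUnion D).filter (f · ≠ 0) ⊆ D i := by
    intro p hp
    obtain ⟨hpU, hp0⟩ := mem_filter.1 hp
    obtain ⟨j, hj, hpj⟩ := mem_biUnion.1 hpU
    exact mem_of_sum_le_sum_of_isChain hf (hD j hj) (hD i hi) (hmax j hj) hp0 hpj
  calc ∑ p ∈ s.biUnion D, f p = ∑ p ∈ (s.biUnion D).filter (f · ≠ 0), f p :=
        (sum_filter_ne_zero _).symm
    _ ≤ ∑ p ∈ D i, f p := sum_le_sum_of_subset hsub
    _ ≤ s.sup fun i => ∑ p ∈ D i, f p := le_sup (f := fun i => ∑ p ∈ D i, f p) hi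

end ChainSupport

lemma Finsupp.finset_sup_apply {ι α : Type*} (s : Finset ι) (g : ι → α →₀ ℕ) (x : α) :
    s.sup g x = s.sup fun i => g i x :=
  apply_sup_eq_sup_comp (fun m : α →₀ ℕ => m x) (fun _ _ => rfl) rfl

section CoordGen

variable {P W : Type*} [PartialOrder P] {m : P → Monomial W}

lemma CondC2.isChain_support (hm : CondC2 m) (x : W) : IsChain (· ≤ ·) {p | m p x ≠ 0} := by
  intro p hp q hq _
  refine hm p q fun h => ?_
  have := DFunLike.congr_fun h x
  simp only [Finsupp.inf_apply, Finsupp.coe_zero, Pi.zero_apply] at this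
  exact (Nat.min_eq_zero_iff.1 this).elim hp hq

variable [Fintype P]

lemma coordGen_apply (m : P → Monomial W) (a : P) (x : W) :
    coordGen m a x = ∑ p ∈ univ.filter (fun p => ¬ a ≤ p), m p x :=
  Finsupp.finsetSum_apply _ _ _

lemma isLowerSet_filter_not_le (a : P) :
    IsLowerSet (↑(univ.filter fun p : P => ¬ a ≤ p) : Set P) := by
  intro p r hrp hp
  simp only [coe_filter, mem_univ, true_and] at hp ⊢
  exact fun har => hp (har.trans hrp)

lemma coordGen_mono (m : P → Monomial W) : Monotone (coordGen m) := fun _ _ hab =>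
  sum_le_sum_of_subset fun _ hp => by
    simp only [mem_filter, mem_univ, true_and] at hp ⊢
    exact fun hbp => hp (hab.trans hbp)

lemma le_of_coordGen_le_of_ne_zero (hm : CondC2 m) {a b : P} (h : coordGen m a ≤ coordGen m b)
    {p : P} (hp : m p ≠ 0) (hbp : b ≤ p) : a ≤ p := by
  obtain ⟨x, hx⟩ := DFunLike.ne_iff.1 hp
  by_contra hap
  have hmem := mem_of_sum_le_sum_of_isChain (hm.isChain_support x) (isLowerSet_filter_not_le a)
    (isLowerSet_filter_not_le b) (by simpa only [coordGen_apply] using h x) hx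
    (mem_filter.2 ⟨mem_univ p, hap⟩)
  exact (mem_filter.1 hmem).2 hbp

lemma sup_coordGen_eq_of_isLUB (hm : CondC2 m) {s : Finset P} {q : P}
    (hq : IsLUB (s : Set P) q) : s.sup (coordGen m) = coordGen m q := by
  ext x
  have hU : s.biUnion (fun a => univ.filter fun p => ¬ a ≤ p) =
      univ.filter fun p => ¬ q ≤ p := by
    ext p
    simp [isLUB_le_iff hq, upperBounds]
  rw [Finsupp.finset_sup_apply, coordGen_apply, ← hU,
    sum_biUnion_eq_sup_of_isChain (hm.isChain_support x) _ _
      fun a _ => isLowerSet_filter_not_le a]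
  simp only [coordGen_apply]

end CoordGen

namespace SimpleGraph

variable {V : Type*} {G : SimpleGraph V}

lemma IsAcyclic.support_subset_of_preconnected_induce (hacyc : G.IsAcyclic) {s : Set V}
    (hs : (G.induce s).Preconnected) {u w : V} (hu : u ∈ s) (hw : w ∈ s) {P : G.Walk u w}
    (hP : P.IsPath) : ∀ z ∈ P.support, z ∈ s := by
  classical
  obtain ⟨W⟩ := hs ⟨u, hu⟩ ⟨w, hw⟩
  let W' : G.Walk u w := W.map (Embedding.induce s).toHom
  have hPW' : P = W'.toPath :=
    congrArg Subtype.val ((hacyc.subsingleton_path u w).elim ⟨P, hP⟩ _)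
  intro z hz
  rw [hPW'] at hz
  obtain ⟨z', -, rfl⟩ :=
    List.mem_map.1 (Walk.support_map _ W ▸ Walk.support_toPath_subset_support W' hz)
  exact z'.2

lemma Connected.preconnected_induce_of_forall_isPath (hconn : G.Connected) {s : Set V}
    (h : ∀ u ∈ s, ∀ w ∈ s, ∀ P : G.Walk u w, P.IsPath → ∀ z ∈ P.support, z ∈ s) :
    (G.induce s).Preconnected := by
  classical
  rintro ⟨u, hu⟩ ⟨w, hw⟩
  obtain ⟨W⟩ := hconn.preconnected u w
  exact ⟨W.toPath.1.induce s (h u hu w hw _ W.toPath.2)⟩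

lemma IsAcyclic.preconnected_induce_inter (hacyc : G.IsAcyclic) {s t : Set V}
    (hs : (G.induce s).Preconnected) (ht : (G.induce t).Preconnected) :
    (G.induce (s ∩ t)).Preconnected := by
  classical
  rintro ⟨u, hu⟩ ⟨w, hw⟩
  obtain ⟨W⟩ := hs ⟨u, hu.1⟩ ⟨w, hw.1⟩
  let P := (W.map (Embedding.induce s).toHom).toPath
  exact ⟨P.1.induce (s ∩ t) fun z hz =>
    ⟨hacyc.support_subset_of_preconnected_induce hs hu.1 hw.1 P.2 z hz,
      hacyc.support_subset_of_preconnected_induce ht hu.2 hw.2 P.2 z hz⟩⟩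

end SimpleGraph

section Subtrees

open SimpleGraph

variable {V : Type*} {G : SimpleGraph V}

lemma vertexSubtree_le_iff {v : V} {p : SubtreePoset G} : vertexSubtree G v ≤ p ↔ v ∈ p.val :=
  singleton_subset_iff

lemma isLUB_image_vertexSubtree (q : SubtreePoset G) :
    IsLUB (↑(q.val.image (vertexSubtree G))) q := by
  refine ⟨?_, fun p hp v hv => ?_⟩
  · rintro _ ha
    obtain ⟨v, hv, rfl⟩ := mem_image.1 ha
    exact vertexSubtree_le_iff.2 hv
  · exact vertexSubtree_le_iff.1 (hp (mem_image_of_mem _ hv))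

variable [Fintype V]

lemma meetIrreducible_of_maximal_not_mem (hacyc : G.IsAcyclic) {v : V} {pm : SubtreePoset G}
    (hpm : Maximal (fun p : SubtreePoset G => v ∉ p.val) pm) :
    pm.val ≠ univ ∧ ∀ a b : SubtreePoset G, pm < a → pm < b → ¬ IsGLB {a, b} pm := by
  refine ⟨fun h => hpm.1 (h ▸ mem_univ v), fun a b ha hb hglb => ?_⟩
  have hva : v ∈ a.val := by_contra fun h => ha.not_ge (hpm.2 h ha.le)
  have hvb : v ∈ b.val := by_contra fun h => hb.not_ge (hpm.2 h hb.le)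
  let c : SubtreePoset G := ⟨a.val ∩ b.val, by
    rw [coe_inter]; exact hacyc.preconnected_induce_inter a.2 b.2⟩
  have hc : c ≤ pm :=
    hglb.2 (by rintro _ (rfl | rfl); exacts [inter_subset_left, inter_subset_right])
  exact hpm.1 (hc (mem_inter.2 ⟨hva, hvb⟩))

variable (hconn : G.Connected) (hacyc : G.IsAcyclic)
include hconn hacyc

lemma exists_isLUB_subtrees (T : Finset (SubtreePoset G)) :
    ∃ q, IsLUB (↑T : Set (SubtreePoset G)) q := by
  classical
  let U := univ.filter fun p : SubtreePoset G => ∀ a ∈ T, a ≤ p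
  let val : SubtreePoset G → Finset V := Subtype.val
  have hmem : ∀ {z}, z ∈ U.inf val ↔ ∀ p ∈ U, z ∈ p.val := mem_inf
  refine ⟨⟨U.inf val, hconn.preconnected_induce_of_forall_isPath
    fun u hu w hw P hP z hz => hmem.2 fun p hp => ?_⟩, ?_, ?_⟩
  · exact hacyc.support_subset_of_preconnected_induce p.2 (hmem.1 hu p hp) (hmem.1 hw p hp) hP z hz
  · intro a ha v hv
    exact hmem.2 fun p hp => (mem_filter.1 hp).2 a ha hv
  · intro p hp
    exact Finset.inf_le (f := val) (mem_filter.2 ⟨mem_univ p, hp⟩)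

end Subtrees

section Coordinatization

variable {V W : Type*} [Fintype V] {G : SimpleGraph V} {lab : SubtreePoset G → Monomial W}

lemma exists_coordGen_eq_sup_vertexSubtree (hC2 : CondC2 lab) (q : SubtreePoset G) :
    ∃ s : Finset {a : SubtreePoset G // ∃ v, a = vertexSubtree G v},
      coordGen lab q = s.sup fun a => coordGen lab a.val := by
  refine ⟨q.val.image fun v => ⟨vertexSubtree G v, v, rfl⟩, ?_⟩
  rw [sup_image, ← sup_coordGen_eq_of_isLUB hC2 (isLUB_image_vertexSubtree q), sup_image]
  rfl

lemma coordGen_le_coordGen_iff (hacyc : G.IsAcyclic)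
    (hC1 : ∀ p : SubtreePoset G,
      (p.val ≠ univ ∧ ∀ a b : SubtreePoset G, p < a → p < b → ¬ IsGLB {a, b} p) →
        lab p ≠ 0)
    (hC2 : CondC2 lab) {q q' : SubtreePoset G} :
    coordGen lab q ≤ coordGen lab q' ↔ q ≤ q' := by
  refine ⟨fun h v hvq => by_contra fun hvq' => ?_, fun h => coordGen_mono lab h⟩
  obtain ⟨pm, hq'pm, hpm⟩ :=
    Finite.exists_le_maximal (p := fun p : SubtreePoset G => v ∉ p.val) hvq'
  have hqpm := le_of_coordGen_le_of_ne_zero hC2 h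
    (hC1 pm (meetIrreducible_of_maximal_not_mem hacyc hpm)) hq'pm
  exact hpm.1 (hqpm hvq)

end Coordinatization

/-- for every `p ∈ P_T`, the atoms below `p` are exactly the
vertices of the subtree corresponding to `p`, and the induced subgraph
`T_{≤ p}` is acyclic and connected (it is a subtree); consequently, for any
coordinatization of `P_T` (any labeling satisfying conditions (C1) and (C2)),
the lcm lattice of the resulting monomial ideal is `P_T`. -/
theorem stmt11 {V : Type*} [Fintype V] (G : SimpleGraph V)
    (hconn : G.Connected) (hacyc : G.IsAcyclic) :
    (∀ p : SubtreePoset G,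
      (G.induce (↑p.val : Set V)).IsAcyclic ∧
      (G.induce (↑p.val : Set V)).Preconnected) ∧
    (∀ (p : SubtreePoset G) (v : V), v ∈ p.val ↔ vertexSubtree G v ≤ p) ∧
    (∀ {W : Type} (lab : SubtreePoset G → Monomial W),
      (∀ p : SubtreePoset G,
          (p.val ≠ Finset.univ ∧
            ∀ a b : SubtreePoset G, p < a → p < b → ¬ IsGLB {a, b} p) →
          lab p ≠ 0) →
      CondC2 lab →
      Nonempty (SubtreePoset G ≃o
        LcmLat (fun a : {a : SubtreePoset G // ∃ v, a = vertexSubtree G v} =>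
          coordGen lab a.val))) := by
  refine ⟨fun p => ⟨hacyc.induce _, p.2⟩, fun p v => vertexSubtree_le_iff.symm,
    fun {W} lab hC1 hC2 => ?_⟩
  let Φ := OrderEmbedding.ofMapLEIff
    (fun q => (⟨coordGen lab q, exists_coordGen_eq_sup_vertexSubtree hC2 q⟩ : LcmLat _))
    fun q q' => coordGen_le_coordGen_iff hacyc hC1 hC2
  refine ⟨OrderIso.ofSurjective Φ ?_⟩
  rintro ⟨l, s, rfl⟩
  obtain ⟨q, hq⟩ := exists_isLUB_subtrees hconn hacyc (s.image Subtype.val)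
  refine ⟨q, Subtype.ext ?_⟩
  change coordGen lab q = _
  rw [← sup_coordGen_eq_of_isLUB hC2 hq, sup_image]
  rfl
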